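/- arXiv:1711.04397 — 2 statements merged into one kernel-verified Lean document; each statement's English description precedes it below -/
import Mathlib

section
/- Let n ≥ 1, L = 2n+1, let a,b,c,d be nonzero real numbers satisfying (a²+ab)(b²+ab) = (c²+ab)(d²+ab), and set ζ = cd/(ab). Then ⟨Φ̄_n(ζ⁻¹) | T |↑⋯↑⟩ = (a+b)^{2n+1}, where T is the eight-vertex transfer matrix on V^L and |↑⋯↑⟩ is the basis state with all spins up. -/
open scoped BigOperators

noncomputable section

namespace EightVertex

/-- Spin configurations of a chain of length `L`: `0` is spin up, `1` is spin down. -/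
abbrev Cfg (L : ℕ) := Fin L → Fin 2

/-- The Hilbert space `V^L = (ℂ²)^{⊗L}`, with its canonical orthonormal basis indexed
by spin configurations and the standard Hermitian inner product (conjugate-linear in
the first argument). -/
abbrev V (L : ℕ) := EuclideanSpace ℂ (Cfg L)

/-- The canonical basis state `|s₁ ⋯ s_L⟩`. -/
def bs {L : ℕ} (s : Cfg L) : V L := EuclideanSpace.single s 1

/-- The all-spins-up basis state `|↑⋯↑⟩`. -/
def allUp (L : ℕ) : V L := bs (fun _ => 0)

/-- Cyclic successor on `Fin L`. -/
def cyc {L : ℕ} (j : Fin L) : Fin L := ⟨((j : ℕ) + 1) % L, Nat.mod_lt _ j.pos⟩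

/-- Matrix of the translation operator `S`: `S|s₁⋯s_L⟩ = |s_L s₁ ⋯ s_{L-1}⟩`. -/
def Smat (L : ℕ) : Matrix (Cfg L) (Cfg L) ℂ :=
  fun s' s => if (∀ j, s' (cyc j) = s j) then 1 else 0

/-- The translation operator `S` on `V^L`. -/
def Sop (L : ℕ) : V L →ₗ[ℂ] V L := Matrix.toEuclideanLin (Smat L)

/-- The subspace `W^L ⊆ V^L` of alternate-cyclic states: the eigenspace of the
translation operator with eigenvalue `(-1)^{L+1}`. -/
def W (L : ℕ) : Submodule ℂ (V L) :=
  Module.End.eigenspace (Sop L : Module.End ℂ (V L)) ((-1 : ℂ) ^ (L + 1))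

def sigmaX : Matrix (Fin 2) (Fin 2) ℂ := !![0, 1; 1, 0]
def sigmaY : Matrix (Fin 2) (Fin 2) ℂ := !![0, -Complex.I; Complex.I, 0]
def sigmaZ : Matrix (Fin 2) (Fin 2) ℂ := !![1, 0; 0, -1]

/-- The one-site operator `A_j` acting on site `j` of the chain. -/
def site {L : ℕ} (A : Matrix (Fin 2) (Fin 2) ℂ) (j : Fin L) : Matrix (Cfg L) (Cfg L) ℂ :=
  fun s' s => A (s' j) (s j) * ∏ k ∈ Finset.univ.erase j, (if s' k = s k then (1 : ℂ) else 0)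

/-- Matrix of the periodic XYZ Hamiltonian
`H = -(1/2) ∑_j (Jx σ^x_j σ^x_{j+1} + Jy σ^y_j σ^y_{j+1} + Jz σ^z_j σ^z_{j+1})`. -/
def HxyzMat (Jx Jy Jz : ℝ) (L : ℕ) : Matrix (Cfg L) (Cfg L) ℂ :=
  (-(1/2) : ℂ) • ∑ j : Fin L,
    ((Jx : ℂ) • (site sigmaX j * site sigmaX (cyc j)) +
     (Jy : ℂ) • (site sigmaY j * site sigmaY (cyc j)) +
     (Jz : ℂ) • (site sigmaZ j * site sigmaZ (cyc j)))

/-- The periodic XYZ Hamiltonian on `V^L`. -/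
def Hxyz (Jx Jy Jz : ℝ) (L : ℕ) : V L →ₗ[ℂ] V L := Matrix.toEuclideanLin (HxyzMat Jx Jy Jz L)

/-- The XYZ Hamiltonian with the supersymmetric anisotropy parameters
`Jx = 1+ζ`, `Jy = 1-ζ`, `Jz = (ζ²-1)/2`. -/
def HxyzSusy (ζ : ℝ) (L : ℕ) : V L →ₗ[ℂ] V L :=
  Hxyz (1 + ζ) (1 - ζ) ((ζ ^ 2 - 1) / 2) L

/-- The ground-state energy `E₀ = -(2n+1)(3+ζ²)/4`. -/
def E0 (n : ℕ) (ζ : ℝ) : ℝ := -(2 * (n : ℝ) + 1) * (3 + ζ ^ 2) / 4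

/-- Matrix of the spin-parity operator `P = (-1)^L σ^z_1 ⋯ σ^z_L`. -/
def Pmat (L : ℕ) : Matrix (Cfg L) (Cfg L) ℂ :=
  fun s' s => if s' = s then (-1 : ℂ) ^ L * ∏ j, (if s j = 0 then (1 : ℂ) else -1) else 0

/-- The spin-parity operator `P` on `V^L`. -/
def Pop (L : ℕ) : V L →ₗ[ℂ] V L := Matrix.toEuclideanLin (Pmat L)

/-- Spin flip on a single site. -/
def flip : Fin 2 → Fin 2 := fun x => if x = 0 then 1 else 0

/-- Matrix of the spin-reversal operator `R = σ^x_1 ⋯ σ^x_L`. -/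
def Rrevmat (L : ℕ) : Matrix (Cfg L) (Cfg L) ℂ :=
  fun s' s => if (∀ j, s' j = flip (s j)) then 1 else 0

/-- The spin-reversal operator `R` on `V^L`. -/
def Rrev (L : ℕ) : V L →ₗ[ℂ] V L := Matrix.toEuclideanLin (Rrevmat L)

/-- Entries of the eight-vertex `R`-matrix with weights `a,b,c,d`.  In each pair the
first component is the auxiliary-space index, the second one the physical index;
the first argument is the outgoing pair, the second the incoming pair.  In the
ordered basis `↑↑, ↑↓, ↓↑, ↓↓` its rows are `(a,0,0,d), (0,b,c,0), (0,c,b,0), (d,0,0,a)`. -/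
def Rv (a b c d : ℂ) : Fin 2 × Fin 2 → Fin 2 × Fin 2 → ℂ := fun o i =>
  if o = i then (if o.1 = o.2 then a else b)
  else if o.1 = i.2 ∧ o.2 = i.1 ∧ i.1 ≠ i.2 then c
  else if o.1 = o.2 ∧ i.1 = i.2 ∧ o.1 ≠ i.1 then d
  else 0

/-- Matrix of the transfer matrix `T = tr₀(R₀L ⋯ R₀1)` of the eight-vertex model. -/
def Tmat (a b c d : ℂ) (L : ℕ) : Matrix (Cfg L) (Cfg L) ℂ :=
  fun s' s => ∑ t : Cfg L, ∏ j : Fin L, Rv a b c d (t (cyc j), s' j) (t j, s j)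

/-- The transfer matrix `T` of the eight-vertex model on `V^L`. -/
def Top (a b c d : ℂ) (L : ℕ) : V L →ₗ[ℂ] V L := Matrix.toEuclideanLin (Tmat a b c d L)

/-- Entries of the local supercharge `q(ζ) : ℂ² → ℂ² ⊗ ℂ²`, `q|↑⟩ = 0`,
`q|↓⟩ = |↑↑⟩ - ζ|↓↓⟩`; arguments: incoming spin, the two outgoing spins. -/
def qloc (ζ : ℂ) (si o1 o2 : Fin 2) : ℂ :=
  if si = 1 then
    (if o1 = 0 ∧ o2 = 0 then 1 else if o1 = 1 ∧ o2 = 1 then -ζ else 0)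
  else 0

/-- Position of site `k` of the original chain after insertion of one site at `j`. -/
def insIdx {L : ℕ} (j k : Fin L) : Fin (L + 1) :=
  if (k : ℕ) < (j : ℕ) then k.castSucc else k.succ

/-- Matrix of the local supercharge `q_j : V^L → V^{L+1}` acting on the `j`-th site
(`j : Fin L` corresponds to the paper's `j+1 ∈ {1,…,L}`). -/
def qjMat (ζ : ℂ) {L : ℕ} (j : Fin L) : Matrix (Cfg (L + 1)) (Cfg L) ℂ :=
  fun s' s => qloc ζ (s j) (s' j.castSucc) (s' j.succ) *
    ∏ k ∈ Finset.univ.erase j, (if s' (insIdx j k) = s k then (1 : ℂ) else 0)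

/-- Matrix of `∑_{j=0}^{L} (-1)^j q_j`, where `q_0 = S q_L`. -/
def QsumMat (ζ : ℂ) : (L : ℕ) → Matrix (Cfg (L + 1)) (Cfg L) ℂ
  | 0 => 0
  | (M + 1) =>
      Smat (M + 2) * qjMat ζ (Fin.last M) +
      ∑ j : Fin (M + 1), ((-1 : ℂ) ^ ((j : ℕ) + 1)) • qjMat ζ j

/-- The supercharge `Q(ζ) : V^L → V^{L+1}`: it acts as
`√(L/(L+1)) ∑_{j=0}^L (-1)^j q_j` on the alternate-cyclic subspace `W^L` and as zero
on the other eigenspaces of the translation operator (equivalently, on the orthogonal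
complement of `W^L`, since `S` is unitary). -/
def Qsc (ζ : ℝ) (L : ℕ) : V L →ₗ[ℂ] V (L + 1) :=
  (Real.sqrt ((L : ℝ) / ((L : ℝ) + 1)) : ℂ) •
    ((Matrix.toEuclideanLin (QsumMat (ζ : ℂ) L)) ∘ₗ
      ((W L).subtype ∘ₗ ((W L).orthogonalProjection).toLinearMap))

/-- The adjoint supercharge `Q(ζ)† : V^L → V^{L-1}`. -/
def Qadj (ζ : ℝ) : (L : ℕ) → (V L →ₗ[ℂ] V (L - 1))
  | 0 => 0
  | (K + 1) => LinearMap.adjoint (Qsc ζ K)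

/-- Number of down spins of a configuration. -/
def nDown {L : ℕ} (s : Cfg L) : ℕ := (Finset.univ.filter fun j => s j = 1).card

/-- The state `Φ_n(ζ) = ∑_{m=0}^{n} ζ^m ∑_{x₁<⋯<x_{2m+1}} ||x₁,…,x_{2m+1}⟩⟩`. -/
def Phi (ζ : ℝ) (n : ℕ) : V (2 * n + 1) :=
  ∑ s : Cfg (2 * n + 1),
    (if nDown s % 2 = 1 then ((ζ : ℂ) ^ (nDown s / 2)) else 0) • bs s

/-- The state `Φ̄_n(ζ) = ∑_{m=0}^{n} ζ^m ∑_{x₁<⋯<x_{2m}} ||x₁,…,x_{2m}⟩⟩`. -/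
def PhiBar (ζ : ℝ) (n : ℕ) : V (2 * n + 1) :=
  ∑ s : Cfg (2 * n + 1),
    (if nDown s % 2 = 0 then ((ζ : ℂ) ^ (nDown s / 2)) else 0) • bs s

/-!
On `|↑⋯↑⟩` the transfer matrix is a sum over periodic auxiliary configurations `t`, and for each
`t` the outgoing physical spins are forced: the spin at site `j` is `↓` exactly at a domain wall,
where `t` changes between `j` and `j + 1`. The bonds carry weights `a`, `b` (no wall from `↑`,
resp. `↓`) and `d`, `c` (walls `↑↓`, `↓↑`). Pairing with `Φ̄` therefore picks the coefficient of
the wall configuration of `t`; the number of walls is even, so with `ζ = r²` this coefficient is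
`r ^ #walls`. Since `r² c d = a b`, the bond weights `a, r d, r c, b` are gauge equivalent on a
cycle to the site weights `a` (at `↑`) and `b` (at `↓`), so each `t` contributes
`∏ⱼ (a or b)`, and the sum over `t` is `(a + b) ^ L`.
-/

lemma cyc_eq_finRotate (L : ℕ) : (cyc : Fin L → Fin L) = finRotate L := by
  rcases L with _ | m
  · exact funext fun j => j.elim0
  · funext j
    simp [cyc, Fin.ext_iff, Fin.val_add]

lemma prod_comp_cyc {M : Type*} [CommMonoid M] {L : ℕ} (f : Fin L → M) :
    ∏ j, f (cyc j) = ∏ j, f j := by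
  rw [cyc_eq_finRotate]
  exact Equiv.prod_comp (finRotate L) f

lemma prod_cyc_eq_of_gauge {R α : Type*} [CommRing R] [IsDomain R] {L : ℕ}
    (e : α → α → R) (w g : α → R) (hg : ∀ x, g x ≠ 0) (h : ∀ x y, e x y * g x = w x * g y)
    (t : Fin L → α) : ∏ j, e (t j) (t (cyc j)) = ∏ j, w (t j) := by
  have hprod : ∏ j, g (t j) ≠ 0 := Finset.prod_ne_zero_iff.mpr fun j _ => hg (t j)
  apply mul_right_cancel₀ hprod
  calc (∏ j, e (t j) (t (cyc j))) * ∏ j, g (t j)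
      = (∏ j, w (t j)) * ∏ j, g (t (cyc j)) := by
        rw [← Finset.prod_mul_distrib, ← Finset.prod_mul_distrib]
        exact Finset.prod_congr rfl fun j _ => h _ _
    _ = (∏ j, w (t j)) * ∏ j, g (t j) := by rw [prod_comp_cyc fun j => g (t j)]

lemma prod_ite_down_eq_pow_nDown {M : Type*} [CommMonoid M] {L : ℕ} (s : Cfg L) (r : M) :
    ∏ j, (if s j = 1 then r else 1) = r ^ nDown s := by
  rw [Finset.prod_ite, Finset.prod_const_one, Finset.prod_const, mul_one, nDown]

def domainWalls {L : ℕ} (t : Cfg L) : Cfg L := fun j => if t j = t (cyc j) then 0 else 1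

lemma even_nDown_domainWalls {L : ℕ} (t : Cfg L) : Even (nDown (domainWalls t)) := by
  have hsign : ∏ j, (if t j = t (cyc j) then (1 : ℤ) else -1) = 1 :=
    (prod_cyc_eq_of_gauge (fun x y => if x = y then (1 : ℤ) else -1) (fun _ => 1)
      (fun x => if x = 0 then 1 else -1) (by decide) (by decide) t).trans Finset.prod_const_one
  rw [← neg_one_pow_eq_one_iff_even (R := ℤ) (by decide), ← prod_ite_down_eq_pow_nDown]
  refine (Finset.prod_congr rfl fun j _ => ?_).trans hsign
  by_cases h : t j = t (cyc j) <;> simp [domainWalls, h]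

lemma Rv_up_eq_zero (a b c d : ℂ) {x y v : Fin 2} (h : v ≠ if x = y then 0 else 1) :
    Rv a b c d (y, v) (x, 0) = 0 := by
  fin_cases x <;> fin_cases y <;> fin_cases v <;> simp_all [Rv]

lemma prod_Rv_up_eq_zero {L : ℕ} (a b c d : ℂ) {t s : Cfg L} (h : s ≠ domainWalls t) :
    ∏ j, Rv a b c d (t (cyc j), s j) (t j, 0) = 0 := by
  obtain ⟨j, hj⟩ := Function.ne_iff.mp h
  exact Finset.prod_eq_zero (Finset.mem_univ j) (Rv_up_eq_zero a b c d hj)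

lemma pow_nDown_mul_prod_Rv_domainWalls {L : ℕ} {a b c d r : ℂ} (ha : a ≠ 0) (hd : d ≠ 0)
    (hr : r ≠ 0) (hrcd : r ^ 2 * (c * d) = a * b) (t : Cfg L) :
    r ^ nDown (domainWalls t) * ∏ j, Rv a b c d (t (cyc j), domainWalls t j) (t j, 0) =
      ∏ j, (if t j = 0 then a else b) := by
  have hgauge := prod_cyc_eq_of_gauge
    (fun x y => (if x = y then 1 else r) * Rv a b c d (y, if x = y then 0 else 1) (x, 0))
    (fun x => if x = 0 then a else b) (fun x => if x = 0 then 1 else r * d / a)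
    (by intro x; fin_cases x <;> simp [ha, hd, hr])
    (by intro x y; fin_cases x <;> fin_cases y <;> simp [Rv] <;> field_simp;
          linear_combination hrcd) t
  rw [← hgauge, ← prod_ite_down_eq_pow_nDown, ← Finset.prod_mul_distrib]
  refine Finset.prod_congr rfl fun j _ => ?_
  by_cases h : t j = t (cyc j) <;> simp [domainWalls, h]

def phiBarCoeff {L : ℕ} (z : ℂ) (s : Cfg L) : ℂ := if nDown s % 2 = 0 then z ^ (nDown s / 2) else 0

lemma phiBarCoeff_domainWalls {L : ℕ} {z r : ℂ} (hr : r ^ 2 = z) (t : Cfg L) :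
    phiBarCoeff z (domainWalls t) = r ^ nDown (domainWalls t) := by
  obtain ⟨k, hk⟩ := even_nDown_domainWalls t
  rw [phiBarCoeff, hk, if_pos (by omega), ← two_mul, Nat.mul_div_cancel_left _ two_pos, ← hr,
    ← pow_mul]

lemma sum_phiBarCoeff_mul_Tmat_allUp (L : ℕ) {a b c d z : ℂ} (ha : a ≠ 0) (hb : b ≠ 0)
    (hz : z * (c * d) = a * b) :
    ∑ s, phiBarCoeff z s * Tmat a b c d L s (fun _ => 0) = (a + b) ^ L := by
  obtain ⟨r, hr⟩ := IsAlgClosed.exists_pow_nat_eq z two_pos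
  have hd : d ≠ 0 := right_ne_zero_of_mul (right_ne_zero_of_mul (hz ▸ mul_ne_zero ha hb))
  have hr0 : r ≠ 0 := by
    rintro rfl
    simp [← hr, ha, hb] at hz
  have hterm (t : Cfg L) : ∑ s, phiBarCoeff z s * ∏ j, Rv a b c d (t (cyc j), s j) (t j, 0) =
      ∏ j, (if t j = 0 then a else b) := by
    rw [Finset.sum_eq_single (domainWalls t)
      (fun s _ hs => by rw [prod_Rv_up_eq_zero a b c d hs, mul_zero])
      (absurd (Finset.mem_univ _)), phiBarCoeff_domainWalls hr]
    exact pow_nDown_mul_prod_Rv_domainWalls ha hd hr0 (hr ▸ hz) t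
  simp only [Tmat, Finset.mul_sum]
  rw [Finset.sum_comm, Finset.sum_congr rfl fun t _ => hterm t,
    show a + b = ∑ x : Fin 2, if x = 0 then a else b by simp [Fin.sum_univ_two], Fintype.sum_pow]

lemma inner_PhiBar (ζ : ℝ) (n : ℕ) (v : V (2 * n + 1)) :
    inner ℂ (PhiBar ζ n) v = ∑ s, phiBarCoeff (ζ : ℂ) s * v s := by
  simp only [PhiBar, sum_inner, inner_smul_left, bs, EuclideanSpace.inner_single_left, map_one,
    one_mul]
  refine Finset.sum_congr rfl fun s _ => ?_
  congr 1
  split_ifs <;> simp [phiBarCoeff, *, ← Complex.ofReal_pow]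

lemma Top_allUp_apply (a b c d : ℂ) (L : ℕ) (s : Cfg L) :
    Top a b c d L (allUp L) s = Tmat a b c d L s (fun _ => 0) := by
  simp [Top, allUp, bs, Matrix.toLpLin_apply]

theorem statement7_general (n : ℕ) (a b c d : ℝ)
    (ha : a ≠ 0) (hb : b ≠ 0) (hc : c ≠ 0) (hd : d ≠ 0) :
    (inner ℂ (PhiBar (c * d / (a * b))⁻¹ n)
      (Top (a : ℂ) (b : ℂ) (c : ℂ) (d : ℂ) (2 * n + 1) (allUp (2 * n + 1))) : ℂ) =
      ((a : ℂ) + (b : ℂ)) ^ (2 * n + 1) := by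
  have hz : (c * d / (a * b))⁻¹ * (c * d) = a * b := by field_simp
  simp only [inner_PhiBar, Top_allUp_apply]
  exact sum_phiBarCoeff_mul_Tmat_allUp _ (by exact_mod_cast ha) (by exact_mod_cast hb)
    (by exact_mod_cast hz)

/-- Proposition 3.6.  For nonzero real weights satisfying the
supersymmetry relation and `ζ = cd/(ab)`,
`⟨Φ̄_n(ζ⁻¹) | T |↑⋯↑⟩ = (a+b)^{2n+1}`. -/
theorem statement7 (n : ℕ) (hn : 1 ≤ n) (a b c d : ℝ)
    (ha : a ≠ 0) (hb : b ≠ 0) (hc : c ≠ 0) (hd : d ≠ 0)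
    (hrel : (a ^ 2 + a * b) * (b ^ 2 + a * b) = (c ^ 2 + a * b) * (d ^ 2 + a * b)) :
    (inner ℂ (PhiBar (c * d / (a * b))⁻¹ n)
      (Top (a : ℂ) (b : ℂ) (c : ℂ) (d : ℂ) (2 * n + 1) (allUp (2 * n + 1))) : ℂ) =
      ((a : ℂ) + (b : ℂ)) ^ (2 * n + 1) :=
  statement7_general n a b c d ha hb hc hd

end EightVertex
end
end

section
/- Let n ≥ 1, L = 2n+1, and let a,b,c,d be complex numbers with a,b nonzero, and T the eight-vertex transfer matrix on V^L with weights a,b,c,d. Then ⟨↑⋯↑| T |↑⋯↑⟩ = a^{2n+1} + b^{2n+1}, and for every 1 ≤ m ≤ n and positions 1 ≤ x₁ < x₂ < ⋯ < x_{2m} ≤ 2n+1 one has ⟨⟨x₁,…,x_{2m}|| T |↑⋯↑⟩ = (cd/(ab))^m (α(x₁,…,x_{2m}) + δ(x₁,…,x_{2m})), where α(x₁,…,x_{2m}) = a^{x₂−x₁} b^{x₃−x₂} ⋯ a^{x_{2m}−x_{2m−1}} b^{2n+1−(x_{2m}−x₁)} and δ(x₁,…,x_{2m}) = b^{x₂−x₁}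 a^{x₃−x₂} ⋯ b^{x_{2m}−x_{2m−1}} a^{2n+1−(x_{2m}−x₁)}. -/
open scoped BigOperators

noncomputable section

namespace EightVertex

/-- The alternating product
`α(x₁,…,x_{2m}) = a^{x₂-x₁} b^{x₃-x₂} ⋯ a^{x_{2m}-x_{2m-1}} b^{L-(x_{2m}-x₁)}`
(with the roles of `a` and `b` swapped it gives `δ(x₁,…,x_{2m})`); the positions are
`x 0, …, x (2m-1)`. -/
def altProd (a b : ℂ) (L m : ℕ) (x : ℕ → ℕ) : ℂ :=
  (∏ i ∈ Finset.range (2 * m - 1), (if i % 2 = 0 then a else b) ^ (x (i + 1) - x i)) *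
    b ^ (L - (x (2 * m - 1) - x 0))

/-- The spin configuration of length `2n+1` with down spins exactly at the (1-based)
positions `x 0, …, x (2m-1)`; it labels the basis state `||x₁,…,x_{2m}⟩⟩`. -/
def cfgOf (n m : ℕ) (x : ℕ → ℕ) : Cfg (2 * n + 1) :=
  fun j => if (j : ℕ) + 1 ∈ (Finset.range (2 * m)).image x then 1 else 0


section Statement19Aux

/-- The set of (1-based) down positions. -/
def dnset (m : ℕ) (x : ℕ → ℕ) : Finset ℕ := (Finset.range (2*m)).image x

/-- Number of down positions `≤ j`. -/
def Dx (m : ℕ) (x : ℕ → ℕ) (j : ℕ) : ℕ :=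
  ((Finset.range (2*m)).filter (fun i => x i ≤ j)).card

/-- The auxiliary-space configuration determined by initial value `ε`. -/
def tc (m : ℕ) (x : ℕ → ℕ) (ε : ℕ) (k : ℕ) : Fin 2 :=
  if (ε + Dx m x k) % 2 = 1 then 1 else 0

def nxt (w v : Fin 2) : Fin 2 := if v = 1 then flip w else w

lemma fin2_cases (i : Fin 2) : i = 0 ∨ i = 1 := by fin_cases i <;> simp

lemma Dx_succ (m : ℕ) (x : ℕ → ℕ) (hinj : Set.InjOn x (Finset.range (2*m))) (k : ℕ) :
    Dx m x (k+1) = Dx m x k + (if k+1 ∈ dnset m x then 1 else 0) := by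
  have hsplit : (Finset.range (2*m)).filter (fun i => x i ≤ k+1)
      = (Finset.range (2*m)).filter (fun i => x i ≤ k) ∪
        (Finset.range (2*m)).filter (fun i => x i = k+1) := by
    ext i
    simp only [Finset.mem_filter, Finset.mem_union, Finset.mem_range]
    omega
  have hdisj : Disjoint ((Finset.range (2*m)).filter (fun i => x i ≤ k))
      ((Finset.range (2*m)).filter (fun i => x i = k+1)) := by
    rw [Finset.disjoint_left]
    intro i hi hi'
    simp only [Finset.mem_filter] at hi hi'
    omega
  have hcard : ((Finset.range (2*m)).filter (fun i => x i = k+1)).card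
      = (if k+1 ∈ dnset m x then 1 else 0) := by
    by_cases h : k+1 ∈ dnset m x
    · obtain ⟨i0, hi0, hx0⟩ := Finset.mem_image.1 h
      have : (Finset.range (2*m)).filter (fun i => x i = k+1) = {i0} := by
        ext i
        simp only [Finset.mem_filter, Finset.mem_singleton]
        constructor
        · rintro ⟨h1, h2⟩
          exact hinj (by simpa using h1) (by simpa using hi0) (h2.trans hx0.symm)
        · rintro rfl; exact ⟨hi0, hx0⟩
      simp [this, h]
    · have : (Finset.range (2*m)).filter (fun i => x i = k+1) = ∅ := by
        ext i
        simp only [Finset.mem_filter, Finset.notMem_empty, iff_false, not_and]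
        intro h1 h2
        exact h (Finset.mem_image.2 ⟨i, h1, h2⟩)
      simp [this, h]
  rw [Dx, hsplit, Finset.card_union_of_disjoint hdisj, hcard]; rfl

lemma Dx_zero (m : ℕ) (x : ℕ → ℕ) (hpos : ∀ i, i < 2*m → 1 ≤ x i) : Dx m x 0 = 0 := by
  rw [Dx, Finset.card_eq_zero]
  ext i
  simp only [Finset.mem_filter, Finset.mem_range, Finset.notMem_empty, iff_false, not_and]
  intro h1 h2
  have := hpos i h1
  omega

lemma Dx_eq_of (m : ℕ) (x : ℕ → ℕ) (r k : ℕ) (hr : r ≤ 2*m)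
    (h : ∀ i, i < 2*m → (i < r ↔ x i ≤ k)) : Dx m x k = r := by
  have : (Finset.range (2*m)).filter (fun i => x i ≤ k) = Finset.range r := by
    ext i
    simp only [Finset.mem_filter, Finset.mem_range]
    constructor
    · rintro ⟨h1, h2⟩; exact (h i h1).2 h2
    · intro hi
      have hi2 : i < 2*m := lt_of_lt_of_le hi hr
      exact ⟨hi2, (h i hi2).1 hi⟩
  simp [Dx, this]

lemma tc_step (m : ℕ) (x : ℕ → ℕ) (hinj : Set.InjOn x (Finset.range (2*m))) (ε k : ℕ) :
    nxt (tc m x ε k) (if k+1 ∈ dnset m x then 1 else 0) = tc m x ε (k+1) := by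
  have hD := Dx_succ m x hinj k
  by_cases h : k + 1 ∈ dnset m x
  · rw [if_pos h] at hD
    by_cases hp : (ε + Dx m x k) % 2 = 1
    · have h2 : ¬ (ε + Dx m x (k+1)) % 2 = 1 := by omega
      simp [tc, nxt, flip, h, hp, h2]
    · have h2 : (ε + Dx m x (k+1)) % 2 = 1 := by omega
      simp [tc, nxt, flip, h, hp, h2]
  · rw [if_neg h] at hD
    have h2 : Dx m x (k+1) = Dx m x k := by omega
    simp [tc, nxt, h, h2]

lemma Rv_up (a b c d : ℂ) (u v w : Fin 2) :
    Rv a b c d (u, v) (w, 0) =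
      if u = nxt w v then
        (if v = 1 then (if w = 1 then c else d) else (if w = 1 then b else a))
      else 0 := by
  fin_cases u <;> fin_cases v <;> fin_cases w <;> simp [Rv, nxt, flip, Prod.ext_iff]

/-- The candidate auxiliary configuration as a `Cfg`. -/
def tcC (m : ℕ) (x : ℕ → ℕ) (ε : ℕ) (L : ℕ) : Cfg L := fun j => tc m x ε (j : ℕ)

/-- Weight of site `k` (0-based) given initial parity `ε`. -/
def wK (a b c d : ℂ) (m : ℕ) (x : ℕ → ℕ) (ε : ℕ) (k : ℕ) : ℂ :=
  if k+1 ∈ dnset m x then (if (ε + Dx m x k) % 2 = 1 then c else d)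
  else (if (ε + Dx m x k) % 2 = 1 then b else a)

def pw (a b c d : ℂ) (m : ℕ) (x : ℕ → ℕ) (L : ℕ) (ε : ℕ) : ℂ :=
  ∏ k ∈ Finset.range L, wK a b c d m x ε k

lemma tc_consist (L m : ℕ) (x : ℕ → ℕ) (hL : 0 < L)
    (hinj : Set.InjOn x (Finset.range (2*m)))
    (hpos : ∀ i, i < 2*m → 1 ≤ x i)
    (hD2 : Dx m x L = 2*m) (ε : ℕ) (s' : Cfg L)
    (hs : ∀ j : Fin L, s' j = if (j:ℕ)+1 ∈ dnset m x then 1 else 0) (j : Fin L) :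
    tcC m x ε L (cyc j) = nxt (tcC m x ε L j) (s' j) := by
  rw [hs j]
  by_cases hj : (j:ℕ)+1 < L
  · have hc : cyc j = ⟨(j:ℕ)+1, hj⟩ := by
      simp [cyc, Nat.mod_eq_of_lt hj]
    rw [hc]
    exact (tc_step m x hinj ε (j:ℕ)).symm
  · have hjL : (j:ℕ)+1 = L := by have := j.isLt; omega
    have hc : cyc j = ⟨0, hL⟩ := by simp [cyc, hjL]
    rw [hc]
    show tc m x ε 0 = nxt (tc m x ε (j:ℕ)) _
    rw [tc_step m x hinj ε (j:ℕ), hjL]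
    have h0 : Dx m x 0 = 0 := Dx_zero m x hpos
    have : (ε + Dx m x 0) % 2 = (ε + Dx m x L) % 2 := by omega
    simp only [tc, this]

lemma t_det (L m : ℕ) (x : ℕ → ℕ) (hL : 0 < L)
    (hinj : Set.InjOn x (Finset.range (2*m)))
    (hpos : ∀ i, i < 2*m → 1 ≤ x i)
    (s' : Cfg L)
    (hs : ∀ j : Fin L, s' j = if (j:ℕ)+1 ∈ dnset m x then 1 else 0)
    (t : Cfg L) (hcons : ∀ j : Fin L, t (cyc j) = nxt (t j) (s' j)) :
    ∀ k, (hk : k < L) → t ⟨k, hk⟩ = tc m x ((t ⟨0, hL⟩ : Fin 2) : ℕ) k := by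
  intro k
  induction k with
  | zero =>
    intro hk
    have h0 : Dx m x 0 = 0 := Dx_zero m x hpos
    have heq : (⟨0, hk⟩ : Fin L) = ⟨0, hL⟩ := rfl
    rw [heq]
    rcases fin2_cases (t ⟨0, hL⟩) with hw | hw <;> rw [hw] <;> simp [tc, h0]
  | succ k ih =>
    intro hk
    have hk' : k < L := by omega
    have hc : cyc ⟨k, hk'⟩ = ⟨k+1, hk⟩ := by simp [cyc, Nat.mod_eq_of_lt hk]
    have := hcons ⟨k, hk'⟩
    rw [hc] at this
    rw [this, ih hk', hs ⟨k, hk'⟩]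
    exact tc_step m x hinj _ _

lemma Tmat_up_eq (a b c d : ℂ) (L m : ℕ) (x : ℕ → ℕ) (hL : 0 < L)
    (hinj : Set.InjOn x (Finset.range (2*m)))
    (hpos : ∀ i, i < 2*m → 1 ≤ x i)
    (hD2 : Dx m x L = 2*m)
    (s' : Cfg L)
    (hs : ∀ j : Fin L, s' j = if (j:ℕ)+1 ∈ dnset m x then 1 else 0) :
    Tmat a b c d L s' (fun _ => 0) = pw a b c d m x L 0 + pw a b c d m x L 1 := by
  classical
  have hwt : ∀ ε : ℕ,
      (∏ j : Fin L, (if tcC m x ε L (cyc j) = nxt (tcC m x ε L j) (s' j) then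
        (if s' j = 1 then (if tcC m x ε L j = 1 then c else d)
          else (if tcC m x ε L j = 1 then b else a)) else 0))
      = pw a b c d m x L ε := by
    intro ε
    have h1 : ∀ j : Fin L,
        (if tcC m x ε L (cyc j) = nxt (tcC m x ε L j) (s' j) then
          (if s' j = 1 then (if tcC m x ε L j = 1 then c else d)
            else (if tcC m x ε L j = 1 then b else a)) else 0)
        = wK a b c d m x ε (j:ℕ) := by
      intro j
      rw [if_pos (tc_consist L m x hL hinj hpos hD2 ε s' hs j), hs j]
      by_cases h : (j:ℕ)+1 ∈ dnset m x <;>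
        by_cases hp : (ε + Dx m x (j:ℕ)) % 2 = 1 <;>
          simp [wK, tcC, tc, h, hp]
    rw [Finset.prod_congr rfl (fun j _ => h1 j), pw]
    exact Fin.prod_univ_eq_prod_range (fun k => wK a b c d m x ε k) L
  have h2 : Tmat a b c d L s' (fun _ => 0)
      = ∑ t : Cfg L, ∏ j : Fin L, (if t (cyc j) = nxt (t j) (s' j) then
          (if s' j = 1 then (if t j = 1 then c else d)
            else (if t j = 1 then b else a)) else 0) := by
    rw [Tmat]
    exact Finset.sum_congr rfl (fun t _ => Finset.prod_congr rfl
      (fun j _ => Rv_up a b c d _ _ _))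
  have hne : tcC m x 0 L ≠ tcC m x 1 L := by
    intro h
    have := congrFun h ⟨0, hL⟩
    simp [tcC, tc, Dx_zero m x hpos] at this
  have hzero : ∀ t ∈ (Finset.univ : Finset (Cfg L)),
      t ∉ ({tcC m x 0 L, tcC m x 1 L} : Finset (Cfg L)) →
      (∏ j : Fin L, (if t (cyc j) = nxt (t j) (s' j) then
        (if s' j = 1 then (if t j = 1 then c else d)
          else (if t j = 1 then b else a)) else 0)) = 0 := by
    intro t _ hmem
    by_cases hc : ∀ j : Fin L, t (cyc j) = nxt (t j) (s' j)
    · exfalso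
      apply hmem
      have hdet := t_det L m x hL hinj hpos s' hs t hc
      have ht : t = tcC m x ((t ⟨0, hL⟩ : Fin 2) : ℕ) L := by
        funext j
        have := hdet (j:ℕ) j.isLt
        simpa [tcC] using this
      rcases fin2_cases (t ⟨0, hL⟩) with hw | hw <;> rw [hw] at ht <;>
        simp [ht, Finset.mem_insert, Finset.mem_singleton]
    · push_neg at hc
      obtain ⟨j, hj⟩ := hc
      exact Finset.prod_eq_zero (Finset.mem_univ j) (if_neg hj)
  rw [h2, ← Finset.sum_subset
    (Finset.subset_univ ({tcC m x 0 L, tcC m x 1 L} : Finset (Cfg L))) hzero,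
    Finset.sum_pair hne, hwt 0, hwt 1]

section Eval
variable (a b c d : ℂ) (L m : ℕ) (x : ℕ → ℕ)

/-- 0-based boundary of the `r`-th segment. -/
def bnd (m : ℕ) (x : ℕ → ℕ) (L : ℕ) (r : ℕ) : ℕ := if r < 2*m then x r - 1 else L

variable (hm : 1 ≤ m)
  (hmono : ∀ i j, i < j → j < 2*m → x i < x j)
  (h1 : 1 ≤ x 0) (hxL : x (2*m-1) ≤ L)

include hmono in
lemma hle : ∀ i j, i ≤ j → j < 2*m → x i ≤ x j := by
  intro i j hij hj
  rcases eq_or_lt_of_le hij with rfl | h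
  · exact le_refl _
  · exact le_of_lt (hmono i j h hj)

include hmono h1 in
lemma hpos' : ∀ i, i < 2*m → 1 ≤ x i := by
  intro i hi
  exact le_trans h1 (hle m x hmono 0 i (Nat.zero_le i) hi)

include hmono hxL in
lemma hxiL : ∀ i, i < 2*m → x i ≤ L := by
  intro i hi
  exact le_trans (hle m x hmono i (2*m-1) (by omega) (by omega)) hxL

lemma mem_dnset (k : ℕ) : k ∈ dnset m x ↔ ∃ i, i < 2*m ∧ x i = k := by
  simp [dnset, Finset.mem_image]

include hmono h1 in
lemma wK_head (ε k : ℕ) (hk : k < x 0 - 1) :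
    wK a b c d m x ε k = (if ε % 2 = 1 then b else a) := by
  have hnd : k + 1 ∉ dnset m x := by
    rw [mem_dnset]
    rintro ⟨i, hi, hxi⟩
    have := hle m x hmono 0 i (Nat.zero_le i) hi
    omega
  have hD : Dx m x k = 0 := by
    apply Dx_eq_of m x 0 k (by omega)
    intro i hi
    have := hle m x hmono 0 i (Nat.zero_le i) hi
    omega
  simp [wK, hnd, hD]

include hmono h1 in
lemma wK_down (ε i : ℕ) (hi : i < 2*m) :
    wK a b c d m x ε (x i - 1) = (if (ε + i) % 2 = 1 then c else d) := by
  have hp := hpos' m x hmono h1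
  have hnd : (x i - 1) + 1 ∈ dnset m x := by
    rw [mem_dnset]
    exact ⟨i, hi, by have := hp i hi; omega⟩
  have hD : Dx m x (x i - 1) = i := by
    apply Dx_eq_of m x i (x i - 1) (by omega)
    intro i' hi'
    constructor
    · intro h
      have := hmono i' i h hi
      have := hp i' hi'
      omega
    · intro h
      by_contra hc
      have := hle m x hmono i i' (by omega) hi'
      have := hp i hi
      omega
  simp [wK, hnd, hD]

include hmono h1 in
lemma wK_run (ε i k : ℕ) (hi : i < 2*m) (hk1 : x i ≤ k)
    (hk2 : i+1 < 2*m → k+1 < x (i+1)) :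
    wK a b c d m x ε k = (if (ε + (i+1)) % 2 = 1 then b else a) := by
  have hp := hpos' m x hmono h1
  have hnd : k + 1 ∉ dnset m x := by
    rw [mem_dnset]
    rintro ⟨j, hj, hxj⟩
    rcases le_or_gt j i with h | h
    · have := hle m x hmono j i h hi
      omega
    · have h2m : i + 1 < 2*m := by omega
      have := hle m x hmono (i+1) j h hj
      have := hk2 h2m
      omega
  have hD : Dx m x k = i + 1 := by
    apply Dx_eq_of m x (i+1) k (by omega)
    intro i' hi'
    constructor
    · intro h
      exact le_trans (hle m x hmono i' i (by omega) hi) hk1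
    · intro h
      by_contra hc
      have h2m : i + 1 < 2*m := by omega
      have := hle m x hmono (i+1) i' (by omega) hi'
      have := hk2 h2m
      omega
  simp [wK, hnd, hD]

include hm hmono h1 hxL in
lemma pref (ε : ℕ) : ∀ r, r ≤ 2*m →
    ∏ k ∈ Finset.range (bnd m x L r), wK a b c d m x ε k
      = (if ε % 2 = 1 then b else a)^(x 0 - 1) *
        ∏ i ∈ Finset.range r, ((if (ε+i) % 2 = 1 then c else d) *
          (if (ε+(i+1)) % 2 = 1 then b else a)^(bnd m x L (i+1) - x i)) := by
  intro r
  induction r with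
  | zero =>
    intro _
    have hb0 : bnd m x L 0 = x 0 - 1 := if_pos (by omega)
    rw [hb0, Finset.prod_range_zero, mul_one]
    rw [Finset.prod_congr rfl
      (fun k hk => wK_head a b c d m x hmono h1 ε k (Finset.mem_range.1 hk))]
    rw [Finset.prod_const, Finset.card_range]
  | succ r ih =>
    intro hr
    have hr' : r < 2*m := by omega
    have hbr : bnd m x L r = x r - 1 := if_pos hr'
    have hposr := hpos' m x hmono h1 r hr'
    have hlt : x r - 1 < bnd m x L (r+1) := by
      by_cases h : r+1 < 2*m
      · rw [bnd, if_pos h]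
        have := hmono r (r+1) (by omega) h
        have := hpos' m x hmono h1 (r+1) h
        omega
      · rw [bnd, if_neg h]
        have := hxiL L m x hmono hxL r hr'
        omega
    have hble : bnd m x L r ≤ bnd m x L (r+1) := by rw [hbr]; omega
    rw [Finset.range_eq_Ico,
      ← Finset.prod_Ico_consecutive _ (Nat.zero_le (bnd m x L r)) hble,
      ← Finset.range_eq_Ico, ih (by omega)]
    have hsplit : ∏ k ∈ Finset.Ico (bnd m x L r) (bnd m x L (r+1)), wK a b c d m x ε k
        = (if (ε+r) % 2 = 1 then c else d) *
          (if (ε+(r+1)) % 2 = 1 then b else a)^(bnd m x L (r+1) - x r) := by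
      rw [hbr, Finset.prod_eq_prod_Ico_succ_bot hlt]
      congr 1
      · exact wK_down a b c d m x hmono h1 ε r hr'
      · have hx : x r - 1 + 1 = x r := by omega
        rw [hx]
        rw [Finset.prod_congr rfl (fun k hk =>
          wK_run a b c d m x hmono h1 ε r k hr' (Finset.mem_Ico.1 hk).1
            (fun h2 => by
              have hk2 := (Finset.mem_Ico.1 hk).2
              rw [bnd, if_pos h2] at hk2
              omega))]
        rw [Finset.prod_const, Nat.card_Ico]
    rw [hsplit, Finset.prod_range_succ]
    ring

include hm hmono h1 hxL in
lemma pw_eval (ε : ℕ) :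
    pw a b c d m x L ε
      = (if ε % 2 = 1 then b else a)^(x 0 - 1) *
        ∏ i ∈ Finset.range (2*m), ((if (ε+i) % 2 = 1 then c else d) *
          (if (ε+(i+1)) % 2 = 1 then b else a)^(bnd m x L (i+1) - x i)) := by
  have hb : bnd m x L (2*m) = L := if_neg (lt_irrefl _)
  have hpref := pref a b c d L m x hm hmono h1 hxL ε (2*m) le_rfl
  rw [hb] at hpref
  rw [pw]
  exact hpref

lemma prod_cd (c d : ℂ) (ε : ℕ) (k : ℕ) :
    ∏ i ∈ Finset.range (2*k), (if (ε+i) % 2 = 1 then c else d) = c^k * d^k := by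
  induction k with
  | zero => simp
  | succ k ih =>
    have h2 : 2*(k+1) = (2*k)+1+1 := by ring
    rw [h2, Finset.prod_range_succ, Finset.prod_range_succ, ih]
    by_cases hε : ε % 2 = 1
    · rw [if_pos (by omega : (ε + 2*k) % 2 = 1),
        if_neg (by omega : ¬ (ε + (2*k+1)) % 2 = 1)]
      ring
    · rw [if_neg (by omega : ¬ (ε + 2*k) % 2 = 1),
        if_pos (by omega : (ε + (2*k+1)) % 2 = 1)]
      ring

lemma prod_ab (a b : ℂ) (k : ℕ) :
    ∏ i ∈ Finset.range (2*k+1), (if i % 2 = 0 then a else b) = a^(k+1) * b^k := by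
  induction k with
  | zero => simp
  | succ k ih =>
    have h2 : 2*(k+1)+1 = (2*k+1)+1+1 := by ring
    rw [h2, Finset.prod_range_succ, Finset.prod_range_succ, ih]
    rw [if_neg (by omega : ¬ (2*k+1) % 2 = 0),
      if_pos (by omega : (2*k+1+1) % 2 = 0)]
    ring

include hm hmono h1 hxL in
lemma pw_one (ha : a ≠ 0) (hb : b ≠ 0) :
    pw a b c d m x L 1 = (c*d/(a*b))^m * altProd a b L m x := by
  have hp := hpos' m x hmono h1
  rw [pw_eval a b c d L m x hm hmono h1 hxL 1, Finset.prod_mul_distrib,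
    if_pos (by norm_num : (1:ℕ) % 2 = 1), prod_cd c d 1 m]
  have hsplit : ∏ i ∈ Finset.range (2*m),
      (if (1+(i+1)) % 2 = 1 then b else a)^(bnd m x L (i+1) - x i)
      = (∏ i ∈ Finset.range (2*m-1), (if i % 2 = 0 then a else b)^(x (i+1) - 1 - x i))
          * b^(L - x (2*m-1)) := by
    have h2m : 2*m = (2*m-1)+1 := by omega
    rw [h2m, Finset.prod_range_succ]
    congr 1
    · apply Finset.prod_congr rfl
      intro i hi
      have hi' : i < 2*m-1 := Finset.mem_range.1 hi
      have hb1 : bnd m x L (i+1) = x (i+1) - 1 := if_pos (by omega)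
      rw [hb1]
      by_cases hpi : i % 2 = 0
      · rw [if_neg (by omega), if_pos hpi]
      · rw [if_pos (by omega), if_neg hpi]
    · have hb2 : bnd m x L ((2*m-1)+1) = L := by rw [bnd, if_neg (by omega)]
      rw [hb2, if_pos (by omega : (1+((2*m-1)+1)) % 2 = 1)]
      norm_num
  rw [hsplit]
  have halt : altProd a b L m x
      = (∏ i ∈ Finset.range (2*m-1), (if i % 2 = 0 then a else b)^(x (i+1) - 1 - x i))
        * (a^m * b^m) * (b^(L - x (2*m-1)) * b^(x 0 - 1)) := by
    rw [altProd]
    have hexp : ∀ i ∈ Finset.range (2*m-1),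
        (if i % 2 = 0 then a else b)^(x (i+1) - x i)
          = (if i % 2 = 0 then a else b)^(x (i+1) - 1 - x i) *
            (if i % 2 = 0 then a else b) := by
      intro i hi
      have hi' : i < 2*m-1 := Finset.mem_range.1 hi
      have hlt : x i < x (i+1) := hmono i (i+1) (by omega) (by omega)
      have he : x (i+1) - x i = (x (i+1) - 1 - x i) + 1 := by
        have := hp i (by omega)
        omega
      rw [he, pow_succ]
    rw [Finset.prod_congr rfl hexp, Finset.prod_mul_distrib]
    have hab : ∏ i ∈ Finset.range (2*m-1), (if i % 2 = 0 then a else b)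
        = a^m * b^(m-1) := by
      have h2m : 2*m-1 = 2*(m-1)+1 := by omega
      rw [h2m, prod_ab a b (m-1)]
      have : m - 1 + 1 = m := by omega
      rw [this]
    rw [hab]
    have hbe : L - (x (2*m-1) - x 0) = (L - x (2*m-1)) + (x 0 - 1) + 1 := by
      have := hxiL L m x hmono hxL (2*m-1) (by omega)
      have := hp (2*m-1) (by omega)
      have := hle m x hmono 0 (2*m-1) (by omega) (by omega)
      omega
    rw [hbe, pow_add, pow_add, pow_one,
      show b^m = b^(m-1) * b from by rw [← pow_succ]; congr 1; omega]
    ring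
  rw [halt]
  have hab0 : (a*b)^m ≠ 0 := pow_ne_zero _ (mul_ne_zero ha hb)
  rw [div_pow, div_mul_eq_mul_div, eq_div_iff hab0]
  ring

lemma pw_zero_swap : pw a b c d m x L 0 = pw b a d c m x L 1 := by
  rw [pw, pw]
  apply Finset.prod_congr rfl
  intro k _
  by_cases h : k+1 ∈ dnset m x
  · rcases Nat.mod_two_eq_zero_or_one (Dx m x k) with hp | hp
    · rw [wK, wK, if_pos h, if_pos h, if_neg (by omega), if_pos (by omega)]
    · rw [wK, wK, if_pos h, if_pos h, if_pos (by omega), if_neg (by omega)]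
  · rcases Nat.mod_two_eq_zero_or_one (Dx m x k) with hp | hp
    · rw [wK, wK, if_neg h, if_neg h, if_neg (by omega), if_pos (by omega)]
    · rw [wK, wK, if_neg h, if_neg h, if_pos (by omega), if_neg (by omega)]

end Eval

lemma pw_m0 (a b c d : ℂ) (x : ℕ → ℕ) (L ε : ℕ) :
    pw a b c d 0 x L ε = (if ε % 2 = 1 then b else a)^L := by
  have h : ∀ k ∈ Finset.range L, wK a b c d 0 x ε k = (if ε % 2 = 1 then b else a) := by
    intro k _
    simp [wK, dnset, Dx]
  rw [pw, Finset.prod_congr rfl h, Finset.prod_const, Finset.card_range]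

lemma inner_bs_Top (a b c d : ℂ) (L : ℕ) (s' s : Cfg L) :
    (inner ℂ (bs s') (Top a b c d L (bs s)) : ℂ) = Tmat a b c d L s' s := by
  simp [bs, Top, Matrix.toEuclideanLin_apply, EuclideanSpace.inner_single_left,
    Matrix.mulVec_single]

end Statement19Aux

/-- equations (3.21).  Matrix elements of the eight-vertex
transfer matrix with respect to the all-up state:
`⟨↑⋯↑|T|↑⋯↑⟩ = a^{2n+1} + b^{2n+1}` and
`⟨⟨x₁,…,x_{2m}||T|↑⋯↑⟩ = (cd/ab)^m (α(x₁,…,x_{2m}) + δ(x₁,…,x_{2m}))`. -/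
theorem statement19 (n : ℕ) (hn : 1 ≤ n) (a b c d : ℂ) (ha : a ≠ 0) (hb : b ≠ 0) :
    (inner ℂ (allUp (2 * n + 1))
        (Top a b c d (2 * n + 1) (allUp (2 * n + 1))) : ℂ) =
      a ^ (2 * n + 1) + b ^ (2 * n + 1) ∧
    ∀ m : ℕ, 1 ≤ m → m ≤ n → ∀ x : ℕ → ℕ,
      (∀ i j : ℕ, i < j → j < 2 * m → x i < x j) →
      1 ≤ x 0 → x (2 * m - 1) ≤ 2 * n + 1 →
      (inner ℂ (bs (cfgOf n m x))
          (Top a b c d (2 * n + 1) (allUp (2 * n + 1))) : ℂ) =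
        (c * d / (a * b)) ^ m *
          (altProd a b (2 * n + 1) m x + altProd b a (2 * n + 1) m x) := by
  constructor
  · rw [show allUp (2*n+1) = bs (fun _ => 0) from rfl, inner_bs_Top]
    rw [Tmat_up_eq a b c d (2*n+1) 0 (fun _ => 1) (by omega)
      (fun i hi => by simp at hi)
      (fun i hi => by omega)
      (by simp [Dx])
      (fun _ => 0) (fun j => by simp [dnset])]
    rw [pw_m0, pw_m0]
    norm_num
  · intro m hm1 hmn x hx h10 hxle
    rw [show allUp (2*n+1) = bs (fun _ => 0) from rfl, inner_bs_Top]
    have hmono : ∀ i j, i < j → j < 2*m → x i < x j := fun i j hij hj => hx i j hij hj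
    have hinj : Set.InjOn x ↑(Finset.range (2*m)) := by
      intro i hi j hj hij
      simp only [Finset.coe_range, Set.mem_Iio] at hi hj
      rcases lt_trichotomy i j with h | h | h
      · exact absurd hij (ne_of_lt (hx i j h hj))
      · exact h
      · exact absurd hij.symm (ne_of_lt (hx j i h hi))
    have hpos := hpos' m x hmono h10
    have hD2 : Dx m x (2*n+1) = 2*m := by
      apply Dx_eq_of m x (2*m) (2*n+1) le_rfl
      intro i hi
      exact ⟨fun _ => hxiL (2*n+1) m x hmono hxle i hi, fun _ => hi⟩
    rw [Tmat_up_eq a b c d (2*n+1) m x (by omega) hinj hpos hD2 (cfgOf n m x)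
      (fun j => rfl)]
    rw [pw_zero_swap,
      pw_one a b c d (2*n+1) m x hm1 hmono h10 hxle ha hb,
      pw_one b a d c (2*n+1) m x hm1 hmono h10 hxle hb ha,
      show d*c/(b*a) = c*d/(a*b) from by rw [mul_comm d c, mul_comm b a]]
    ring


end EightVertex
end
end
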